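/- The weight of a vertex is non-increasing in its own level: for every vertex v and every i ∈ ℕ, W_v(i + 1) ≤ W_v(i). -/

import Mathlib

open scoped Classical

/-- `D_v(i)`: the number of neighbors of `v` whose level equals `i`. -/
noncomputable def levelCount {V : Type*} [Fintype V] (G : SimpleGraph V)
    (ℓ : V → ℕ) (v : V) (i : ℕ) : ℕ :=
  (Finset.univ.filter fun u => G.Adj v u ∧ ℓ u = i).card

/-- `D_v(i, j)`: the number of neighbors of `v` whose level lies in `[i, j]`. -/
noncomputable def levelCountRange {V : Type*} [Fintype V] (G : SimpleGraph V)
    (ℓ : V → ℕ) (v : V) (i j : ℕ) : ℕ :=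
  (Finset.univ.filter fun u => G.Adj v u ∧ i ≤ ℓ u ∧ ℓ u ≤ j).card

/-- The weight of a vertex `v`:
`W_v = min{k_v, D_v(0, ℓ(v))}·μ·β^(−ℓ(v)) + Σ_{i > ℓ(v)} min{k_v, D_v(i)}·μ·β^(−i)`. -/
noncomputable def vertexWeight {V : Type*} [Fintype V] (G : SimpleGraph V)
    (β μ : ℝ) (k : V → ℕ) (ℓ : V → ℕ) (v : V) : ℝ :=
  (min (k v) (levelCountRange G ℓ v 0 (ℓ v)) : ℝ) * μ * β ^ (-(ℓ v : ℤ))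
    + ∑' i : ℕ, if ℓ v < i then (min (k v) (levelCount G ℓ v i) : ℝ) * μ * β ^ (-(i : ℤ)) else 0

/-!
Raising the level of `v` from `i` to `i + 1` moves the neighbours of level `i + 1` out of the
tail sum and into the capped head term. Since `min k (a + b) ≤ min k a + min k b` and
`β ^ (-(i + 1)) ≤ β ^ (-i)`, the head term grows by at most the tail term it absorbs. The neighbour
counts of `v` do not see the level of `v` itself, as `G` has no loops.
-/

open Finset

theorem tsum_ite_lt_eq_add_tsum_ite_lt {α : Type*} [AddCommGroup α] [TopologicalSpace α]
    [IsTopologicalAddGroup α] [T2Space α] {f : ℕ → α} {j : ℕ}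
    (hf : Summable fun n => if j < n then f n else 0) :
    (∑' n, if j < n then f n else 0) = f (j + 1) + ∑' n, if j + 1 < n then f n else 0 := by
  rw [hf.tsum_eq_add_tsum_ite (j + 1), if_pos j.lt_succ_self]
  congr 1
  exact tsum_congr fun n => by split_ifs <;> first | rfl | omega

theorem min_add_le_min_add_min {K A B : ℝ} (hK : 0 ≤ K) (hA : 0 ≤ A) (hB : 0 ≤ B) :
    min K (A + B) ≤ min K A + min K B := by
  simp only [min_def]
  split_ifs <;> linarith

theorem min_add_mul_le {K A B μ x y : ℝ} (hK : 0 ≤ K) (hA : 0 ≤ A) (hB : 0 ≤ B) (hμ : 0 ≤ μ)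
    (hy : 0 ≤ y) (hyx : y ≤ x) :
    min K (A + B) * μ * y ≤ min K A * μ * x + min K B * μ * y :=
  calc min K (A + B) * μ * y ≤ (min K A + min K B) * μ * y := by
        gcongr; exact min_add_le_min_add_min hK hA hB
    _ = min K A * μ * y + min K B * μ * y := by ring
    _ ≤ min K A * μ * x + min K B * μ * y := by
        have : 0 ≤ min K A := le_min hK hA
        gcongr

section LevelCounts

variable {V : Type*} [Fintype V] (G : SimpleGraph V) (ℓ : V → ℕ) (v : V)

theorem levelCount_update_self (j n : ℕ) :
    levelCount G (Function.update ℓ v j) v n = levelCount G ℓ v n := by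
  unfold levelCount
  congr 1
  refine filter_congr fun u _ => and_congr_right fun h => ?_
  rw [Function.update_of_ne (G.ne_of_adj h).symm]

theorem levelCountRange_update_self (j a b : ℕ) :
    levelCountRange G (Function.update ℓ v j) v a b = levelCountRange G ℓ v a b := by
  unfold levelCountRange
  congr 1
  refine filter_congr fun u _ => and_congr_right fun h => ?_
  rw [Function.update_of_ne (G.ne_of_adj h).symm]

theorem levelCountRange_succ {a b : ℕ} (hab : a ≤ b + 1) :
    levelCountRange G ℓ v a (b + 1) = levelCountRange G ℓ v a b + levelCount G ℓ v (b + 1) := by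
  unfold levelCountRange levelCount
  rw [← card_union_of_disjoint (disjoint_filter.2 fun u _ h₁ h₂ => by omega), ← filter_or]
  congr 1
  refine filter_congr fun u _ => ?_
  constructor
  · rintro ⟨hadj, h⟩
    by_cases hb : ℓ u = b + 1
    · exact .inr ⟨hadj, hb⟩
    · exact .inl ⟨hadj, h.1, by omega⟩
  · rintro (⟨hadj, h⟩ | ⟨hadj, hb⟩)
    · exact ⟨hadj, h.1, by omega⟩
    · exact ⟨hadj, by omega, hb.le⟩

theorem levelCount_eq_zero_of_notMem_image {n : ℕ} (hn : n ∉ univ.image ℓ) :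
    levelCount G ℓ v n = 0 := by
  rw [levelCount, card_eq_zero, filter_eq_empty_iff]
  rintro u - ⟨-, rfl⟩
  exact hn (mem_image_of_mem ℓ (mem_univ u))

end LevelCounts

theorem weight_antitone_in_level_general {V : Type*} [Fintype V] (G : SimpleGraph V)
    (c : V → ℝ) (k : V → ℕ) (β μ : ℝ) (ℓ : V → ℕ)
    (hc : ∀ v, 0 < c v) (hβ : 1 < β) (hμ : ∀ v, c v < μ) :
    ∀ (v : V) (i : ℕ),
      vertexWeight G β μ k (Function.update ℓ v (i + 1)) v
        ≤ vertexWeight G β μ k (Function.update ℓ v i) v := by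
  intro v i
  have hsum : Summable fun n =>
      if i < n then (min (k v) (levelCount G ℓ v n) : ℝ) * μ * β ^ (-(n : ℤ)) else 0 :=
    summable_of_ne_finset_zero (s := univ.image ℓ) fun n hn => by
      simp [levelCount_eq_zero_of_notMem_image G ℓ v hn]
  simp only [vertexWeight, Function.update_self, levelCount_update_self,
    levelCountRange_update_self]
  rw [tsum_ite_lt_eq_add_tsum_ite_lt hsum, levelCountRange_succ G ℓ v (Nat.zero_le _)]
  have key := min_add_mul_le (k v).cast_nonneg (levelCountRange G ℓ v 0 i).cast_nonneg
    (levelCount G ℓ v (i + 1)).cast_nonneg ((hc v).trans (hμ v)).le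
    (zpow_pos (one_pos.trans hβ) (-((i + 1 : ℕ) : ℤ))).le
    (zpow_le_zpow_right₀ hβ.le (by omega : -((i + 1 : ℕ) : ℤ) ≤ -(i : ℤ)))
  push_cast at key ⊢
  linarith

/-- The weight of a vertex is non-increasing in its own level: for every vertex `v` and every
`i ∈ ℕ`, `W_v(i + 1) ≤ W_v(i)`, where `W_v(j)` is the weight of `v` computed with the level of `v`
replaced by `j` and all other vertex levels unchanged. -/
theorem weight_antitone_in_level {V : Type*} [Fintype V] (G : SimpleGraph V)
    (c : V → ℝ) (k : V → ℕ) (β μ : ℝ) (ℓ : V → ℕ)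
    (hc : ∀ v, 0 < c v) (hk : ∀ v, 1 ≤ k v) (hβ : 1 < β) (hμ : ∀ v, c v < μ) :
    ∀ (v : V) (i : ℕ),
      vertexWeight G β μ k (Function.update ℓ v (i + 1)) v
        ≤ vertexWeight G β μ k (Function.update ℓ v i) v :=
  weight_antitone_in_level_general G c k β μ ℓ hc hβ hμ
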